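/- For every permutation σ ∈ S_n, Mc σ = r(δ(Majcode(c σ))), where c is the complement map on permutations, δ is the complement on subexcedent words, and r reverses a word. -/

import Mathlib

/-!
Let `u_k` be the subword of `σ` formed by its letters `≥ k`. The `j`-th entry of `Mc σ` is
`maj u_{j+1} - maj u_{j+2}`, and since complementation reverses the order of letters, the entry of
`Majcode (c σ)` in position `n - 1 - j` is `maj (c u_{j+1}) - maj (c u_{j+2})`. Complementing a word
with distinct adjacent letters turns every ascent into a descent and back, so
`maj (c u) + maj u = 0 + 1 + ⋯ + (|u| - 1)`; hence the two differences add up to `|u_{j+2}| = n - 1 - j`,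
which is what `δ` followed by `r` says. None of these natural-number subtractions truncates, because
erasing the smallest letter of a word never raises `maj` and lowers it by at most the length of what is
left.
-/

/-- Descent set (ligne of route) of a word, with 1-based positions. -/
def ligne (w : List ℕ) : Finset ℕ :=
  (Finset.Icc 1 (w.length - 1)).filter (fun i => w.getD (i-1) 0 > w.getD i 0)

/-- Major index of a word. -/
def maj (w : List ℕ) : ℕ := ∑ i ∈ ligne w, i

/-- Inversion number of a word. -/
def inv (w : List ℕ) : ℕ :=
  ((Finset.range w.length ×ˢ Finset.range w.length).filter
    (fun p => p.1 < p.2 ∧ w.getD p.1 0 > w.getD p.2 0)).card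

/-- `w` is (the one-line word of) a permutation of `1,…,n`. -/
def IsPermWord (n : ℕ) (w : List ℕ) : Prop := w.Perm (List.range' 1 n)

/-- One-line word of `σ ∈ S_n` with values in `1,…,n`. -/
def toWord {n : ℕ} (σ : Equiv.Perm (Fin n)) : List ℕ := List.ofFn (fun i => (σ i : ℕ) + 1)

/-- Subexcedent word: `0 ≤ d_i ≤ i-1` (1-based), i.e. `d_i ≤ i` for 0-based `i`. -/
def Subexcedent (w : List ℕ) : Prop := ∀ i < w.length, w.getD i 0 ≤ i

/-- Subdiagonal word: `0 ≤ d_i ≤ n-i` (1-based). -/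
def Subdiagonal (w : List ℕ) : Prop := ∀ i < w.length, w.getD i 0 + i + 1 ≤ w.length

/-- Lehmer code: `d_i = #{j < i : x_j > x_i}`. -/
def invcode (w : List ℕ) : List ℕ :=
  (List.range w.length).map (fun i => ((Finset.range i).filter (fun j => w.getD j 0 > w.getD i 0)).card)

/-- `Lc`-code: `d_i = #{j > i : x_i > x_j}`. -/
def lc (w : List ℕ) : List ℕ :=
  (List.range w.length).map (fun i => ((Finset.Ico (i+1) w.length).filter (fun j => w.getD i 0 > w.getD j 0)).card)

/-- Major index code: `d_i = maj(σ|_i) - maj(σ|_{i-1})`, where `σ|_i` erases letters `> i`. -/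
def majcode (w : List ℕ) : List ℕ :=
  (List.range w.length).map (fun i => maj (w.filter (· ≤ i+1)) - maj (w.filter (· ≤ i)))

/-- `Mc`-code: `d_i = maj(σ^{(i)}) - maj(σ^{(i+1)})`, where `σ^{(i)}` erases letters `< i`. -/
def mc (w : List ℕ) : List ℕ :=
  (List.range w.length).map (fun i => maj (w.filter (fun x => i+1 ≤ x)) - maj (w.filter (fun x => i+2 ≤ x)))

/-- One-line word of the inverse permutation. -/
def invWord (w : List ℕ) : List ℕ :=
  (List.range w.length).map (fun i => w.idxOf (i+1) + 1)

/-- `Ic σ = Lc (σ⁻¹)`. -/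
def ic (w : List ℕ) : List ℕ := lc (invWord w)

/-- Inverse ligne of route. -/
def iligne (w : List ℕ) : Finset ℕ := ligne (invWord w)

/-- Complement map `δ` on codes: `δ(d₁⋯d_n) = (0-d₁)(1-d₂)⋯(n-1-d_n)`. -/
def deltaC (w : List ℕ) : List ℕ :=
  (List.range w.length).map (fun i => i - w.getD i 0)

/-- Nondecreasing rearrangement of a word. -/
def sortW (w : List ℕ) : List ℕ := List.insertionSort (· ≤ ·) w

/-- Set-valued statistic `El = Ligne ∘ Mc⁻¹` on subdiagonal words. -/
noncomputable def El (d : List ℕ) : Finset ℕ := by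
  classical
  exact if h : ∃ w, IsPermWord d.length w ∧ mc w = d then ligne h.choose else ∅

/-- Set-valued statistic `Eul = Ligne ∘ Majcode⁻¹` on subexcedent words. -/
noncomputable def Eul (d : List ℕ) : Finset ℕ := by
  classical
  exact if h : ∃ w, IsPermWord d.length w ∧ majcode w = d then ligne h.choose else ∅

def des (w : List ℕ) : ℕ := (ligne w).card

theorem sum_ligne_eq_sum_range (w : List ℕ) (g : ℕ → ℕ) :
    ∑ i ∈ ligne w, g i =
      ∑ k ∈ Finset.range (w.length - 1), if w.getD (k + 1) 0 < w.getD k 0 then g (k + 1) else 0 := by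
  rw [ligne, Finset.sum_filter, ← Finset.Ico_add_one_right_eq_Icc, Finset.sum_Ico_eq_sum_range,
    Nat.add_sub_cancel]
  refine Finset.sum_congr rfl fun k _ => ?_
  simp [Nat.add_comm 1 k]

theorem des_eq_sum_range (w : List ℕ) :
    des w = ∑ k ∈ Finset.range (w.length - 1), if w.getD (k + 1) 0 < w.getD k 0 then 1 else 0 := by
  rw [des, Finset.card_eq_sum_ones, sum_ligne_eq_sum_range]

-- `t.headD x < x` says that `x :: t` has a descent at position 1 (for `t = []` it reads `x < x`).
theorem des_cons (x : ℕ) (t : List ℕ) :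
    des (x :: t) = (if t.headD x < x then 1 else 0) + des t := by
  rcases t with _ | ⟨y, t⟩
  · simp [des, ligne]
  rw [List.headD_cons]
  simp only [des_eq_sum_range, List.length_cons, Nat.add_sub_cancel, Finset.sum_range_succ' _ t.length,
    List.getD_cons_succ, List.getD_cons_zero]
  omega

theorem maj_cons (x : ℕ) (t : List ℕ) :
    maj (x :: t) = (if t.headD x < x then 1 else 0) + maj t + des t := by
  rcases t with _ | ⟨y, t⟩
  · simp [maj, des, ligne]
  simp only [maj, des_eq_sum_range, sum_ligne_eq_sum_range, List.length_cons, Nat.add_sub_cancel,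
    Finset.sum_range_succ' _ t.length, List.getD_cons_succ, List.getD_cons_zero, List.headD_cons]
  rw [Nat.add_comm, Nat.add_assoc, ← Finset.sum_add_distrib]
  congr 2 with k
  split_ifs <;> rfl

theorem des_le_length (w : List ℕ) : des w ≤ w.length :=
  (Finset.card_filter_le _ _).trans (by simp)

theorem sum_Icc_one_pred_eq_sum_range (m : ℕ) :
    ∑ i ∈ Finset.Icc 1 (m - 1), i = ∑ i ∈ Finset.range m, i := by
  cases m with
  | zero => simp
  | succ m =>
    rw [Nat.add_sub_cancel, ← Finset.Ico_add_one_right_eq_Icc, Finset.sum_Ico_eq_sum_range,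
      Finset.sum_range_succ']
    simp [Nat.add_comm]

theorem maj_map_add_maj {f : ℕ → ℕ} {u : List ℕ} (hu : u.IsChain (· ≠ ·))
    (hf : StrictAntiOn f {x | x ∈ u}) :
    maj (u.map f) + maj u = ∑ i ∈ Finset.range u.length, i := by
  rw [maj, maj, ligne, ligne, List.length_map, ← sum_Icc_one_pred_eq_sum_range,
    ← Finset.sum_filter_not_add_sum_filter (Finset.Icc 1 (u.length - 1))
      (fun i => u.getD (i - 1) 0 > u.getD i 0)]
  congr 1
  refine Finset.sum_congr (Finset.filter_congr fun i hi => ?_) fun _ _ => rfl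
  obtain ⟨hi1, hi2⟩ := Finset.mem_Icc.mp hi
  have hlt : i - 1 < u.length := by omega
  have hlt' : i < u.length := by omega
  have hne : u[i - 1] ≠ u[i] := by
    have := List.isChain_iff_getElem.mp hu (i - 1) (by omega)
    simpa [Nat.sub_add_cancel hi1] using this
  have hmem : ∀ k (hk : k < u.length), u[k] ∈ {x | x ∈ u} := fun k hk => List.getElem_mem hk
  have hget : ∀ k (hk : k < u.length), (u.map f).getD k 0 = f u[k] := fun k hk => by simp [hk]
  rw [hget _ hlt, hget _ hlt', List.getD_eq_getElem _ _ hlt, List.getD_eq_getElem _ _ hlt', gt_iff_lt,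
    gt_iff_lt, not_lt, hf.lt_iff_gt (hmem _ hlt') (hmem _ hlt)]
  exact ⟨le_of_lt, fun h => lt_of_le_of_ne h hne⟩

theorem headD_not_lt_of_forall_lt {μ : ℕ} {b : List ℕ} (h : ∀ x ∈ b, μ < x) : ¬ b.headD μ < μ := by
  rcases b with _ | ⟨y, b⟩
  · exact lt_irrefl μ
  · exact not_lt.2 (h y List.mem_cons_self).le

theorem des_append_cons_of_forall_lt {μ : ℕ} : ∀ {a b : List ℕ}, (∀ x ∈ a ++ b, μ < x) →
    des (a ++ b) ≤ des (a ++ μ :: b) ∧ des (a ++ μ :: b) ≤ des (a ++ b) + 1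
  | [], b, h => by
    simp only [List.nil_append] at h ⊢
    rw [des_cons, if_neg (headD_not_lt_of_forall_lt h)]
    omega
  | [x], b, h => by
    have hb : ∀ y ∈ b, μ < y := fun y hy => h y (by simp [hy])
    have hx : μ < x := h x (by simp)
    by_cases hbx : b.headD x < x <;>
      simp only [List.cons_append, List.nil_append, des_cons x, des_cons μ, List.headD_cons, hx, hbx,
        headD_not_lt_of_forall_lt hb, if_true, if_false] <;>
      omega
  | x :: z :: a, b, h => by
    have ih := des_append_cons_of_forall_lt (a := z :: a) (b := b) fun y hy => h y (by simp_all)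
    by_cases hzx : z < x <;>
      simp only [List.cons_append, des_cons x, List.headD_cons, hzx, if_true, if_false] at ih ⊢ <;>
      omega

theorem maj_append_cons_of_forall_lt {μ : ℕ} : ∀ {a b : List ℕ}, (∀ x ∈ a ++ b, μ < x) →
    maj (a ++ b) ≤ maj (a ++ μ :: b) ∧ maj (a ++ μ :: b) ≤ maj (a ++ b) + (a ++ b).length
  | [], b, h => by
    simp only [List.nil_append] at h ⊢
    rw [maj_cons, if_neg (headD_not_lt_of_forall_lt h)]
    have := des_le_length b
    omega
  | [x], b, h => by
    have hb : ∀ y ∈ b, μ < y := fun y hy => h y (by simp [hy])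
    have := des_le_length b
    have hx : μ < x := h x (by simp)
    by_cases hbx : b.headD x < x <;>
      simp only [List.cons_append, List.nil_append, maj_cons x, maj_cons μ, des_cons μ, List.headD_cons,
        List.length_cons, hx, hbx, headD_not_lt_of_forall_lt hb, if_true, if_false] <;>
      omega
  | x :: z :: a, b, h => by
    have h' : ∀ y ∈ (z :: a) ++ b, μ < y := fun y hy => h y (by simp_all)
    have ih := maj_append_cons_of_forall_lt h'
    have hdes := des_append_cons_of_forall_lt h'
    by_cases hzx : z < x <;>
      simp only [List.cons_append, maj_cons x, List.headD_cons, List.length_cons, hzx, if_true,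
        if_false] at ih hdes ⊢ <;>
      omega

theorem maj_sub_add_maj_map_sub {f : ℕ → ℕ} {μ : ℕ} {a b : List ℕ} (hab : ∀ x ∈ a ++ b, μ < x)
    (hnd : (a ++ μ :: b).Nodup) (hf : StrictAntiOn f {x | x ∈ a ++ μ :: b}) :
    maj (a ++ μ :: b) - maj (a ++ b) + (maj ((a ++ μ :: b).map f) - maj ((a ++ b).map f)) =
      (a ++ b).length := by
  have hsub : (a ++ b).Sublist (a ++ μ :: b) := (List.sublist_cons_self μ b).append_left a
  have hcompl := maj_map_add_maj (hnd.isChain) hf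
  have hcompl' := maj_map_add_maj (hnd.sublist hsub).isChain
    (hf.mono fun x hx => hsub.subset hx)
  have hbound := maj_append_cons_of_forall_lt hab
  have hlen : (a ++ μ :: b).length = (a ++ b).length + 1 := by simp; omega
  rw [hlen, Finset.sum_range_succ] at hcompl
  omega

theorem List.filter_map_tsub_le (N i : ℕ) (w : List ℕ) :
    (w.map (N - ·)).filter (· ≤ i) = (w.filter (N - i ≤ ·)).map (N - ·) := by
  rw [List.filter_map]
  congr 1
  exact List.filter_congr fun x _ => by simp only [Function.comp_apply, decide_eq_decide]; omega

theorem List.Nodup.exists_filter_le_eq_append_cons {w : List ℕ} {k : ℕ} (hw : w.Nodup) (hk : k ∈ w) :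
    ∃ a b, w.filter (k ≤ ·) = a ++ k :: b ∧ w.filter (k + 1 ≤ ·) = a ++ b ∧ ∀ x ∈ a ++ b, k < x := by
  obtain ⟨w₁, w₂, rfl⟩ := List.append_of_mem hk
  have hk₁ : k ∉ w₁ := fun h => (List.disjoint_of_nodup_append hw) h List.mem_cons_self
  have hk₂ : k ∉ w₂ := (List.nodup_cons.mp (List.nodup_append.mp hw).2.1).1
  have hfilter : ∀ v : List ℕ, k ∉ v → v.filter (k ≤ ·) = v.filter (k + 1 ≤ ·) := fun v hv =>
    List.filter_congr fun x hx => by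
      have : x ≠ k := fun h => hv (h ▸ hx)
      simp only [decide_eq_decide]; omega
  refine ⟨w₁.filter (k + 1 ≤ ·), w₂.filter (k + 1 ≤ ·), ?_, ?_, fun x hx => ?_⟩
  · simp [List.filter_append, hfilter w₁ hk₁, hfilter w₂ hk₂]
  · simp [List.filter_append]
  · simp only [List.mem_append, List.mem_filter, decide_eq_true_eq] at hx
    omega

theorem length_filter_range'_one_le (n : ℕ) {m : ℕ} (hm : 1 ≤ m) :
    ((List.range' 1 n).filter (m ≤ ·)).length = n + 1 - m := by
  induction n with
  | zero => simp; omega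
  | succ k ih =>
    rw [List.range'_concat, List.filter_append, List.length_append, ih, List.filter_singleton]
    by_cases h : m ≤ 1 + k <;> simp [h] <;> omega

namespace IsPermWord

variable {n : ℕ} {w : List ℕ}

theorem length_eq (hw : IsPermWord n w) : w.length = n := by
  simpa using List.Perm.length_eq hw

theorem nodup (hw : IsPermWord n w) : w.Nodup :=
  List.Perm.nodup_iff hw |>.mpr List.nodup_range'

theorem mem_iff (hw : IsPermWord n w) {x : ℕ} : x ∈ w ↔ 1 ≤ x ∧ x ≤ n := by
  rw [List.Perm.mem_iff hw, List.mem_range'_1]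
  omega

theorem length_filter_le (hw : IsPermWord n w) {m : ℕ} (hm : 1 ≤ m) :
    (w.filter (m ≤ ·)).length = n + 1 - m := by
  rw [(List.Perm.filter _ hw).length_eq, length_filter_range'_one_le n hm]

theorem maj_filter_sub_add_maj_compl_filter_sub (hw : IsPermWord n w) {j : ℕ} (hj : j < n) :
    maj (w.filter (j + 1 ≤ ·)) - maj (w.filter (j + 2 ≤ ·)) +
      (maj ((w.map (n + 1 - ·)).filter (· ≤ n - j)) - maj ((w.map (n + 1 - ·)).filter (· ≤ n - 1 - j))) =
      n - 1 - j := by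
  obtain ⟨a, b, h₁, h₂, hab⟩ := hw.nodup.exists_filter_le_eq_append_cons (hw.mem_iff.mpr ⟨by omega, hj⟩)
  have hlen : (a ++ b).length = n - 1 - j := by rw [← h₂, hw.length_filter_le (by omega)]; omega
  rw [List.filter_map_tsub_le, List.filter_map_tsub_le, show n + 1 - (n - j) = j + 1 by omega,
    show n + 1 - (n - 1 - j) = j + 1 + 1 by omega, h₁, h₂, ← hlen]
  refine maj_sub_add_maj_map_sub hab (h₁ ▸ hw.nodup.filter _) fun _ _ y hy hxy => ?_
  have hy' : y ≤ n := (hw.mem_iff.mp (List.mem_of_mem_filter (h₁ ▸ hy : y ∈ w.filter _))).2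
  omega

end IsPermWord

theorem stmt10 (n : ℕ) (w : List ℕ) (hw : IsPermWord n w) :
    mc w = (deltaC (majcode (w.map (fun x => n + 1 - x)))).reverse := by
  have hlen := hw.length_eq
  apply List.ext_getElem (by simp [mc, majcode, deltaC])
  intro j hj _
  have hjn : j < n := by simpa [mc, hlen] using hj
  simp only [mc, deltaC, majcode, List.getElem_reverse, List.getElem_map, List.getElem_range,
    List.length_map, List.length_range, hlen]
  rw [List.getD_eq_getElem _ _ (by simp; omega)]
  simp only [List.getElem_map, List.getElem_range, show n - 1 - j + 1 = n - j by omega]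
  have := hw.maj_filter_sub_add_maj_compl_filter_sub hjn
  omega
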